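/- arXiv:2210.01246 — 4 statements merged into one kernel-verified Lean document; each statement's English description precedes it below -/
import Mathlib

section
/- Let E be a locally convex space which is the locally convex direct limit of an increasing sequence of Banach spaces E₁ ⊆ E₂ ⊆ ⋯ with compact inclusion maps (a Silva space). Then every compact subset K of E is contained in some E_j and is compact as a subset of E_j. -/
/-!
For radii `ε`, let `V₀ = {0}` and `V_{m+1} = step_m(V_m) + ε_m • closure (step_m (closedBall 0 1))`.
These are compact, convex and balanced, and `U_ε = ⋃ ι_m(V_m)` is convex and absorbent with
`gauge U_ε ∘ ι_j ≤ ‖·‖ / ε_j`, so its gauge is continuous on `E` by finality.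

If `x_j ∉ ι_j (c_j • V_j)` for the radii `1`, the radii can be chosen one at a time so that
`x_j ∉ ι_m (c_j • V_m)` for all `j, m`, i.e. `c_j ≤ gauge U_ε (x_j)`: this uses only that a point
outside the compact set `c • step_m(V_m)` stays outside `c • step_m(V_m) + δ • C` for small `δ`.
For a single `x ≠ 0` this gives Hausdorffness. For `K`, a closed set lying in the image of a
bounded subset of `E_j` is compact in `E_{j+1}`; so if no step works, some `x_m ∈ K` escapes
`ι_m ((m + 1) • V_m)` for every `m`, and the continuous gauge is unbounded on the compact `K`.
-/

open Set Metric Filter Topology Pointwise Bornology Function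

theorem exists_forall_of_forall_exists_update {α : Type*} (P : ℕ → (ℕ → α) → Prop)
    (hP : ∀ m e e', (∀ k < m, e k = e' k) → P m e → P m e') {e₀ : ℕ → α} (h₀ : P 0 e₀)
    (hext : ∀ m e, P m e → ∃ a, P (m + 1) (update e m a)) :
    ∃ ε, ∀ m, P m ε := by
  choose g hg using hext
  let s : (m : ℕ) → {e // P m e} := fun m =>
    Nat.rec ⟨e₀, h₀⟩ (fun m s => ⟨update s.1 m (g m s.1 s.2), hg m s.1 s.2⟩) m
  have hs : ∀ k m, k < m → (s m).1 k = (s (k + 1)).1 k := by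
    intro k m hkm
    induction m, hkm using Nat.le_induction with
    | base => rfl
    | succ m hkm ih => exact (update_of_ne (by omega) _ _).trans ih
  exact ⟨fun k => (s (k + 1)).1 k, fun m => hP m _ _ (fun k hk => hs k m hk) (s m).2⟩

theorem IsClosed.eventually_notMem_add_smul {𝕜 E : Type*} [NormedField 𝕜] [AddCommGroup E]
    [Module 𝕜 E] [TopologicalSpace E] [IsTopologicalAddGroup E] [ContinuousSMul 𝕜 E]
    {A B : Set E} (hA : IsClosed A) (hB : IsCompact B) {y : E} (hy : y ∉ A) :
    ∀ᶠ δ in 𝓝 (0 : 𝕜), y ∉ A + δ • B := by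
  have : ∀ᶠ δ in 𝓝 (0 : 𝕜), ∀ b ∈ B, y - δ • b ∈ Aᶜ := by
    refine hB.eventually_forall_of_forall_eventually fun b _ => ?_
    have hc : Continuous fun p : 𝕜 × E => y - p.1 • p.2 := by fun_prop
    exact hc.continuousAt.eventually_mem (hA.isOpen_compl.mem_nhds (by simpa using hy))
  filter_upwards [this] with δ hδ
  rintro ⟨a, ha, _, ⟨b, hb, rfl⟩, hab⟩
  exact hδ b hb (by rwa [← hab, add_sub_cancel_right])

theorem Balanced.image_linearMap {𝕜 E F : Type*} [NormedField 𝕜] [AddCommGroup E] [Module 𝕜 E]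
    [AddCommGroup F] [Module 𝕜 F] {s : Set E} (hs : Balanced 𝕜 s) (f : E →ₗ[𝕜] F) :
    Balanced 𝕜 (f '' s) := fun a ha => by
  rw [← image_smul_set]
  exact image_mono (hs a ha)

theorem gauge_map_le {E F : Type*} [AddCommGroup E] [Module ℝ E] [AddCommGroup F] [Module ℝ F]
    (f : E →ₗ[ℝ] F) {s : Set E} {t : Set F} (hs : Absorbent ℝ s) (hst : f '' s ⊆ t) (x : E) :
    gauge t (f x) ≤ gauge s x := by
  refine le_of_forall_gt fun b hb => ?_
  obtain ⟨r, hr, hrb, z, hz, rfl⟩ := exists_lt_of_gauge_lt hs hb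
  refine (gauge_le_of_mem hr.le ⟨f z, hst (mem_image_of_mem f hz), ?_⟩).trans_lt hrb
  exact (map_smul f r z).symm

theorem exists_pos_notMem_image_smul {E F : Type*} [AddCommGroup E] [Module ℝ E]
    [NormedAddCommGroup F] [NormedSpace ℝ F] {f : F →ₗ[ℝ] E} (hf : Injective f) {B : Set F}
    (hB : IsBounded B) {x : E} (hx : x ≠ 0) : ∃ c : ℝ, 0 < c ∧ x ∉ f '' (c • B) := by
  by_cases hxf : x ∈ range f
  swap
  · exact ⟨1, one_pos, fun h => hxf (image_subset_range _ _ h)⟩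
  obtain ⟨y, rfl⟩ := hxf
  have hy : y ≠ 0 := by rintro rfl; exact hx (map_zero f)
  have hB' := (NormedSpace.isVonNBounded_iff ℝ).2 hB (isOpen_compl_singleton.mem_nhds hy.symm)
  obtain ⟨c, hcB, hc⟩ :=
    (((hB'.eventually_nhds_zero hy.symm).filter_mono nhdsWithin_le_nhds).and
      (self_mem_nhdsWithin (s := Ioi (0 : ℝ)))).exists
  refine ⟨c, hc, ?_⟩
  rintro ⟨_, ⟨b, hb, rfl⟩, hfb⟩
  exact hcB hb (hf hfb)

section Layers

variable {Ej : ℕ → Type*} [∀ j, NormedAddCommGroup (Ej j)] [∀ j, NormedSpace ℝ (Ej j)]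
  (step : ∀ j, Ej j →ₗ[ℝ] Ej (j + 1))

noncomputable def closureImageBall (k : ℕ) : Set (Ej (k + 1)) :=
  closure (step k '' closedBall 0 1)

theorem isCompact_closureImageBall (hcompact : ∀ j, IsCompactOperator (step j)) (k : ℕ) :
    IsCompact (closureImageBall step k) :=
  (hcompact k).isCompact_closure_image_closedBall 1

theorem convex_closureImageBall (k : ℕ) : Convex ℝ (closureImageBall step k) :=
  ((convex_closedBall _ _).linear_image (step k)).closure

theorem balanced_closureImageBall (k : ℕ) : Balanced ℝ (closureImageBall step k) :=
  ((balanced_closedBall_zero (𝕜 := ℝ)).image_linearMap (step k)).closure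

theorem zero_mem_closureImageBall (k : ℕ) : (0 : Ej (k + 1)) ∈ closureImageBall step k :=
  subset_closure ⟨0, mem_closedBall_self zero_le_one, map_zero _⟩

noncomputable def layer (ε : ℕ → ℝ) : (m : ℕ) → Set (Ej m)
  | 0 => {0}
  | m + 1 => step m '' layer ε m + ε m • closureImageBall step m

variable {step}

theorem zero_mem_layer (ε : ℕ → ℝ) : ∀ m, (0 : Ej m) ∈ layer step ε m
  | 0 => rfl
  | m + 1 => ⟨0, ⟨0, zero_mem_layer ε m, map_zero _⟩, 0,
      zero_mem_smul_set (zero_mem_closureImageBall step m), add_zero 0⟩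

theorem convex_layer (ε : ℕ → ℝ) : ∀ m, Convex ℝ (layer step ε m)
  | 0 => convex_singleton 0
  | m + 1 => ((convex_layer ε m).linear_image (step m)).add
      ((convex_closureImageBall step m).smul (ε m))

theorem balanced_layer (ε : ℕ → ℝ) : ∀ m, Balanced ℝ (layer step ε m)
  | 0 => balanced_zero
  | m + 1 => ((balanced_layer ε m).image_linearMap (step m)).add
      ((balanced_closureImageBall step m).smul (ε m))

theorem isCompact_layer (hcompact : ∀ j, IsCompactOperator (step j)) (ε : ℕ → ℝ) :
    ∀ m, IsCompact (layer step ε m)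
  | 0 => isCompact_singleton
  | m + 1 => ((isCompact_layer hcompact ε m).image (hcompact m).continuous).add
      ((isCompact_closureImageBall step hcompact m).smul (ε m))

theorem layer_mono {ε ε' : ℕ → ℝ} : ∀ {m}, (∀ k < m, |ε k| ≤ |ε' k|) →
    layer step ε m ⊆ layer step ε' m
  | 0, _ => subset_rfl
  | m + 1, h => add_subset_add (image_mono (layer_mono fun k hk => h k (by omega)))
      ((balanced_closureImageBall step m).smul_mono (h m m.lt_succ_self))

theorem image_layer_subset_layer_succ (ε : ℕ → ℝ) (m : ℕ) :
    step m '' layer step ε m ⊆ layer step ε (m + 1) :=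
  subset_add_left _ (zero_mem_smul_set (zero_mem_closureImageBall step m))

theorem image_closedBall_subset_layer_succ {ε : ℕ → ℝ} {m : ℕ} (hε : 0 < ε m) :
    step m '' closedBall 0 (ε m) ⊆ layer step ε (m + 1) := by
  rintro _ ⟨y, hy, rfl⟩
  refine ⟨0, ⟨0, zero_mem_layer ε m, map_zero _⟩, step m y, ⟨step m ((ε m)⁻¹ • y), ?_, ?_⟩,
    zero_add _⟩
  · refine subset_closure (mem_image_of_mem _ ?_)
    rw [mem_closedBall_zero_iff, norm_smul, Real.norm_of_nonneg (inv_nonneg.2 hε.le)]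
    exact inv_mul_le_one_of_le₀ (mem_closedBall_zero_iff.1 hy) hε.le
  · change ε m • step m _ = _
    rw [← map_smul, smul_inv_smul₀ hε.ne']

end Layers

section Neighbourhood

variable {E : Type*} [AddCommGroup E] [Module ℝ E]
  {Ej : ℕ → Type*} [∀ j, NormedAddCommGroup (Ej j)] [∀ j, NormedSpace ℝ (Ej j)]
  (ι : ∀ j, Ej j →ₗ[ℝ] E) (step : ∀ j, Ej j →ₗ[ℝ] Ej (j + 1))

def silvaNhd (ε : ℕ → ℝ) : Set E := ⋃ m, ι m '' layer step ε m

variable {ι step}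

theorem image_smul_layer_subset_of_le (hstep : ∀ j x, ι (j + 1) (step j x) = ι j x)
    (ε : ℕ → ℝ) (c : ℝ) {m n : ℕ} (hmn : m ≤ n) :
    ι m '' (c • layer step ε m) ⊆ ι n '' (c • layer step ε n) := by
  induction n, hmn using Nat.le_induction with
  | base => exact subset_rfl
  | succ n _ ih =>
    refine ih.trans ?_
    rintro _ ⟨_, ⟨v, hv, rfl⟩, rfl⟩
    refine ⟨c • step n v, smul_mem_smul_set (image_layer_subset_layer_succ ε n ⟨v, hv, rfl⟩), ?_⟩
    rw [← map_smul, hstep]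

theorem balanced_silvaNhd (ε : ℕ → ℝ) : Balanced ℝ (silvaNhd ι step ε) :=
  balanced_iUnion fun m => (balanced_layer ε m).image_linearMap (ι m)

theorem convex_silvaNhd (hstep : ∀ j x, ι (j + 1) (step j x) = ι j x) (ε : ℕ → ℝ) :
    Convex ℝ (silvaNhd ι step ε) := by
  refine Directed.convex_iUnion ?_ fun m => (convex_layer ε m).linear_image (ι m)
  refine Monotone.directed_le fun m n hmn => ?_
  simpa using image_smul_layer_subset_of_le hstep ε 1 hmn

theorem image_closedBall_subset_silvaNhd (hstep : ∀ j x, ι (j + 1) (step j x) = ι j x)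
    {ε : ℕ → ℝ} {m : ℕ} (hε : 0 < ε m) :
    ι m '' closedBall 0 (ε m) ⊆ silvaNhd ι step ε := by
  rintro _ ⟨y, hy, rfl⟩
  refine mem_iUnion.2 ⟨m + 1, step m y, image_closedBall_subset_layer_succ hε ⟨y, hy, rfl⟩, ?_⟩
  exact hstep m y

theorem absorbent_silvaNhd (hstep : ∀ j x, ι (j + 1) (step j x) = ι j x)
    (hunion : ∀ x : E, ∃ j, x ∈ LinearMap.range (ι j)) {ε : ℕ → ℝ} (hε : ∀ k, 0 < ε k) :
    Absorbent ℝ (silvaNhd ι step ε) := by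
  rw [absorbent_iff_eventually_nhdsNE_zero]
  intro x
  obtain ⟨m, y, rfl⟩ := hunion x
  have hy : Tendsto (fun c : ℝ => c • y) (𝓝[≠] 0) (𝓝 0) :=
    (Continuous.tendsto' (by fun_prop) 0 0 (zero_smul ℝ y)).mono_left nhdsWithin_le_nhds
  filter_upwards [hy (closedBall_mem_nhds 0 (hε m))] with c hc
  rw [← map_smul]
  exact image_closedBall_subset_silvaNhd hstep (hε m) (mem_image_of_mem _ hc)

theorem gauge_silvaNhd_le (hstep : ∀ j x, ι (j + 1) (step j x) = ι j x)
    {ε : ℕ → ℝ} {m : ℕ} (hε : 0 < ε m) (y : Ej m) :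
    gauge (silvaNhd ι step ε) (ι m y) ≤ ‖y‖ / ε m :=
  (gauge_map_le (ι m) (absorbent_nhds_zero (closedBall_mem_nhds 0 hε))
    (image_closedBall_subset_silvaNhd hstep hε) y).trans_eq (gauge_closedBall hε.le y)

theorem le_gauge_silvaNhd (hstep : ∀ j x, ι (j + 1) (step j x) = ι j x)
    (hunion : ∀ x : E, ∃ j, x ∈ LinearMap.range (ι j)) {ε : ℕ → ℝ} (hε : ∀ k, 0 < ε k)
    {c : ℝ} {x : E} (hx : ∀ m, x ∉ ι m '' (c • layer step ε m)) :
    c ≤ gauge (silvaNhd ι step ε) x := by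
  refine le_gauge_of_notMem ((convex_silvaNhd hstep ε).starConvex ?_)
    (absorbent_silvaNhd hstep hunion hε x) ?_
  · exact mem_iUnion.2 ⟨0, 0, zero_mem_layer ε 0, map_zero _⟩
  · simp only [silvaNhd, smul_set_iUnion, ← image_smul_set, mem_iUnion, not_exists]
    exact hx

end Neighbourhood

section Radii

variable {E : Type*} [AddCommGroup E] [Module ℝ E]
  {Ej : ℕ → Type*} [∀ j, NormedAddCommGroup (Ej j)] [∀ j, NormedSpace ℝ (Ej j)]
  {ι : ∀ j, Ej j →ₗ[ℝ] E} {step : ∀ j, Ej j →ₗ[ℝ] Ej (j + 1)}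

theorem eventually_notMem_image_smul_layer_succ (hstep : ∀ j x, ι (j + 1) (step j x) = ι j x)
    (hinj : ∀ j, Injective (ι j)) (hcompact : ∀ j, IsCompactOperator (step j))
    (e : ℕ → ℝ) {m : ℕ} {c : ℝ} {x : E} (hx : x ∉ ι m '' (c • layer step e m)) :
    ∀ᶠ δ in 𝓝 (0 : ℝ), x ∉ ι (m + 1) '' (c • layer step (update e m δ) (m + 1)) := by
  by_cases hxr : x ∈ range (ι (m + 1))
  swap
  · exact .of_forall fun δ h => hxr (image_subset_range _ _ h)
  obtain ⟨y, rfl⟩ := hxr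
  have hy : y ∉ c • step m '' layer step e m := by
    rintro ⟨_, ⟨v, hv, rfl⟩, rfl⟩
    exact hx ⟨c • v, smul_mem_smul_set hv, by rw [← hstep, map_smul]⟩
  have hA : IsClosed (c • step m '' layer step e m) :=
    (((isCompact_layer hcompact e m).image (hcompact m).continuous).smul c).isClosed
  filter_upwards [hA.eventually_notMem_add_smul
    ((isCompact_closureImageBall step hcompact m).smul c) hy] with δ hδ
  rintro ⟨_, ⟨_, ⟨_, ⟨v, hv, rfl⟩, _, ⟨w, hw, rfl⟩, rfl⟩, rfl⟩, hyy⟩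
  refine hδ ⟨c • step m v, smul_mem_smul_set (mem_image_of_mem _ ?_), δ • c • w,
    smul_mem_smul_set (smul_mem_smul_set hw), ?_⟩
  · exact layer_mono (fun k hk => by rw [update_of_ne hk.ne]) hv
  · rw [← hinj _ hyy]
    simp only [update_self, smul_add, smul_comm δ c]

theorem exists_radii_notMem_image_smul_layer (hstep : ∀ j x, ι (j + 1) (step j x) = ι j x)
    (hinj : ∀ j, Injective (ι j)) (hcompact : ∀ j, IsCompactOperator (step j))
    {x : ℕ → E} {c : ℕ → ℝ} (hx : ∀ j, x j ∉ ι j '' (c j • layer step 1 j)) :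
    ∃ ε : ℕ → ℝ, (∀ k, 0 < ε k) ∧ ∀ j m, x j ∉ ι m '' (c j • layer step ε m) := by
  have hle_one : ∀ {e : ℕ → ℝ} {m}, (∀ k < m, e k ∈ Ioc 0 1) → layer step e m ⊆ layer step 1 m :=
    fun he => layer_mono fun k hk => by
      rw [Pi.one_apply, abs_one, abs_of_pos (he k hk).1]; exact (he k hk).2
  set P : ℕ → (ℕ → ℝ) → Prop :=
    fun m e => (∀ k < m, e k ∈ Ioc 0 1) ∧ ∀ j < m, x j ∉ ι m '' (c j • layer step e m)
  have hP : ∀ m e e', (∀ k < m, e k = e' k) → P m e → P m e' := by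
    rintro m e e' hee' ⟨he, hxe⟩
    refine ⟨fun k hk => hee' k hk ▸ he k hk, fun j hj hmem => hxe j hj ?_⟩
    exact image_mono (smul_set_mono (layer_mono fun k hk => (congrArg abs (hee' k hk)).ge)) hmem
  have hext : ∀ m e, P m e → ∃ δ, P (m + 1) (update e m δ) := by
    rintro m e ⟨he, hxe⟩
    have hxe' : ∀ j ∈ {j | j < m + 1}, x j ∉ ι m '' (c j • layer step e m) := by
      intro j hj
      rcases Nat.lt_succ_iff_lt_or_eq.1 hj with hj | rfl
      · exact hxe j hj
      · exact fun hmem => hx j (image_mono (smul_set_mono (hle_one he)) hmem)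
    have hsmall := (finite_lt_nat (m + 1)).eventually_all.2 fun j hj =>
      eventually_notMem_image_smul_layer_succ hstep hinj hcompact e (hxe' j hj)
    obtain ⟨δ, hδx, hδ⟩ := ((hsmall.filter_mono nhdsWithin_le_nhds).and
      (Ioc_mem_nhdsGT one_pos)).exists
    refine ⟨δ, fun k hk => ?_, hδx⟩
    rcases Nat.lt_succ_iff_lt_or_eq.1 hk with hk | rfl
    · rw [update_of_ne hk.ne]; exact he k hk
    · rwa [update_self]
  obtain ⟨ε, hε⟩ := exists_forall_of_forall_exists_update P hP (e₀ := 1) ⟨nofun, nofun⟩ hext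
  refine ⟨ε, fun k => ((hε (k + 1)).1 k k.lt_succ_self).1, fun j m hmem => ?_⟩
  rcases lt_or_ge j m with hjm | hmj
  · exact (hε m).2 j hjm hmem
  · refine hx j (image_mono (smul_set_mono (hle_one (hε j).1)) ?_)
    exact image_smul_layer_subset_of_le hstep ε (c j) hmj hmem

end Radii

def WithSeminorm {G : Type*} [AddCommGroup G] [Module ℝ G] (_q : Seminorm ℝ G) : Type _ := G

namespace WithSeminorm

variable {G : Type*} [AddCommGroup G] [Module ℝ G] (q : Seminorm ℝ G)

noncomputable instance : SeminormedAddCommGroup (WithSeminorm q) :=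
  q.toAddGroupSeminorm.toSeminormedAddCommGroup

instance : Module ℝ (WithSeminorm q) := inferInstanceAs (Module ℝ G)

noncomputable instance : NormedSpace ℝ (WithSeminorm q) :=
  ⟨fun c x => (map_smul_eq_mul q c x).le⟩

def linearMap : G →ₗ[ℝ] WithSeminorm q := LinearMap.id

end WithSeminorm

section Final

variable {E : Type} [AddCommGroup E] [Module ℝ E] [TopologicalSpace E]
  {Ej : ℕ → Type*} [∀ j, NormedAddCommGroup (Ej j)] [∀ j, NormedSpace ℝ (Ej j)]
  {ι : ∀ j, Ej j →ₗ[ℝ] E} {step : ∀ j, Ej j →ₗ[ℝ] Ej (j + 1)}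

theorem Seminorm.continuous_of_final
    (hfinal : ∀ (F : Type) [AddCommGroup F] [Module ℝ F] [TopologicalSpace F]
      [IsTopologicalAddGroup F] [ContinuousSMul ℝ F] [LocallyConvexSpace ℝ F]
      (f : E →ₗ[ℝ] F), (∀ j, Continuous (f ∘ ι j)) → Continuous f)
    (q : Seminorm ℝ E) (hq : ∀ j, ∃ C, ∀ y, q (ι j y) ≤ C * ‖y‖) : Continuous q := by
  refine continuous_norm.comp (hfinal _ (WithSeminorm.linearMap q) fun j => ?_)
  obtain ⟨C, hC⟩ := hq j
  exact AddMonoidHomClass.continuous_of_bound ((WithSeminorm.linearMap q).comp (ι j)) C hC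

theorem continuous_gauge_silvaNhd (hstep : ∀ j x, ι (j + 1) (step j x) = ι j x)
    (hunion : ∀ x : E, ∃ j, x ∈ LinearMap.range (ι j))
    (hfinal : ∀ (F : Type) [AddCommGroup F] [Module ℝ F] [TopologicalSpace F]
      [IsTopologicalAddGroup F] [ContinuousSMul ℝ F] [LocallyConvexSpace ℝ F]
      (f : E →ₗ[ℝ] F), (∀ j, Continuous (f ∘ ι j)) → Continuous f)
    {ε : ℕ → ℝ} (hε : ∀ k, 0 < ε k) : Continuous (gauge (silvaNhd ι step ε)) :=
  (gaugeSeminorm (balanced_silvaNhd ε) (convex_silvaNhd hstep ε)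
    (absorbent_silvaNhd hstep hunion hε)).continuous_of_final hfinal fun j =>
      ⟨(ε j)⁻¹, fun y => (gauge_silvaNhd_le hstep (hε j) y).trans_eq (div_eq_inv_mul _ _)⟩

theorem t2Space_of_silva [IsTopologicalAddGroup E] (hstep : ∀ j x, ι (j + 1) (step j x) = ι j x)
    (hinj : ∀ j, Injective (ι j)) (hcompact : ∀ j, IsCompactOperator (step j))
    (hunion : ∀ x : E, ∃ j, x ∈ LinearMap.range (ι j))
    (hfinal : ∀ (F : Type) [AddCommGroup F] [Module ℝ F] [TopologicalSpace F]
      [IsTopologicalAddGroup F] [ContinuousSMul ℝ F] [LocallyConvexSpace ℝ F]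
      (f : E →ₗ[ℝ] F), (∀ j, Continuous (f ∘ ι j)) → Continuous f) :
    T2Space E := by
  refine IsTopologicalAddGroup.t2Space_of_zero_sep fun x hx => ?_
  choose c hc hxc using fun j =>
    exists_pos_notMem_image_smul (hinj j) (isCompact_layer hcompact 1 j).isBounded hx
  obtain ⟨ε, hε, hsep⟩ := exists_radii_notMem_image_smul_layer (x := fun _ => x) hstep hinj
    hcompact hxc
  have hgauge := continuous_gauge_silvaNhd hstep hunion hfinal hε
  refine ⟨{z | gauge (silvaNhd ι step ε) z < c 0},
    (isOpen_lt hgauge continuous_const).mem_nhds (by simpa using hc 0), ?_⟩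
  exact (le_gauge_silvaNhd hstep hunion hε (hsep 0)).not_gt

end Final

theorem isCompact_preimage_succ_of_subset_image {E : Type*} [AddCommGroup E] [Module ℝ E]
    [TopologicalSpace E] {Ej : ℕ → Type*} [∀ j, NormedAddCommGroup (Ej j)]
    [∀ j, NormedSpace ℝ (Ej j)] {ι : ∀ j, Ej j →ₗ[ℝ] E} {step : ∀ j, Ej j →ₗ[ℝ] Ej (j + 1)}
    (hinj : ∀ j, Injective (ι j)) (hcont : ∀ j, Continuous (ι j))
    (hstep : ∀ j x, ι (j + 1) (step j x) = ι j x) (hcompact : ∀ j, IsCompactOperator (step j))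
    {K : Set E} (hK : IsClosed K) {j : ℕ} {B : Set (Ej j)} (hB : IsBounded B)
    (hKB : K ⊆ ι j '' B) : K ⊆ range (ι (j + 1)) ∧ IsCompact (ι (j + 1) ⁻¹' K) := by
  have hK' : ι (j + 1) ⁻¹' K ⊆ step j '' B := by
    intro y hy
    obtain ⟨b, hb, hby⟩ := hKB hy
    exact ⟨b, hb, hinj _ (by rw [hstep, hby])⟩
  refine ⟨fun x hx => ?_, ?_⟩
  · obtain ⟨b, -, rfl⟩ := hKB hx
    exact ⟨step j b, hstep j b⟩
  · obtain ⟨L, hL, hBL⟩ := (hcompact j).image_subset_compact_of_bounded hB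
    exact hL.of_isClosed_subset (hK.preimage (hcont _)) (hK'.trans hBL)

theorem stmt6_general (E : Type) [AddCommGroup E] [Module ℝ E] [TopologicalSpace E]
    [IsTopologicalAddGroup E]
    (Ej : ℕ → Type) [∀ j, NormedAddCommGroup (Ej j)] [∀ j, NormedSpace ℝ (Ej j)]
    (ι : ∀ j, Ej j →ₗ[ℝ] E) (hinj : ∀ j, Function.Injective (ι j))
    (hcont : ∀ j, Continuous (ι j))
    (step : ∀ j, Ej j →ₗ[ℝ] Ej (j + 1))
    (hstep : ∀ j x, ι (j + 1) (step j x) = ι j x)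
    (hcompact : ∀ j, IsCompactOperator (⇑(step j)))
    (hunion : ∀ x : E, ∃ j, x ∈ LinearMap.range (ι j))
    (hfinal : ∀ (F : Type) [AddCommGroup F] [Module ℝ F] [TopologicalSpace F]
      [IsTopologicalAddGroup F] [ContinuousSMul ℝ F] [LocallyConvexSpace ℝ F]
      (f : E →ₗ[ℝ] F), (∀ j, Continuous (f ∘ ι j)) → Continuous f)
    (K : Set E) (hK : IsCompact K) :
    ∃ j, K ⊆ Set.range (ι j) ∧ IsCompact ((ι j) ⁻¹' K) := by
  have := t2Space_of_silva hstep hinj hcompact hunion hfinal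
  by_contra! hnot
  have hescape : ∀ m, ∃ x ∈ K, x ∉ ι m '' ((m + 1 : ℝ) • layer step 1 m) := by
    intro m
    by_contra! hsub
    obtain ⟨hKr, hKc⟩ := isCompact_preimage_succ_of_subset_image hinj hcont hstep hcompact
      hK.isClosed (((isCompact_layer hcompact 1 m).smul _).isBounded) hsub
    exact hnot (m + 1) hKr hKc
  choose x hxK hx using hescape
  obtain ⟨ε, hε, hsep⟩ := exists_radii_notMem_image_smul_layer hstep hinj hcompact hx
  obtain ⟨M, hM⟩ := (hK.image (continuous_gauge_silvaNhd hstep hunion hfinal hε)).bddAbove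
  obtain ⟨n, hn⟩ := exists_nat_gt M
  have hlow := le_gauge_silvaNhd hstep hunion hε (hsep n)
  linarith [hM ⟨x n, hxK n, rfl⟩]

/-- Compact regularity of Silva spaces: if a locally convex space `E` is the locally
convex direct limit of an increasing sequence of Banach spaces with compact inclusion
maps, then every compact subset of `E` is contained in some step `E_j` and is compact
there. -/
theorem stmt6 (E : Type) [AddCommGroup E] [Module ℝ E] [TopologicalSpace E]
    [IsTopologicalAddGroup E] [ContinuousSMul ℝ E] [LocallyConvexSpace ℝ E]
    (Ej : ℕ → Type) [∀ j, NormedAddCommGroup (Ej j)] [∀ j, NormedSpace ℝ (Ej j)]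
    [∀ j, CompleteSpace (Ej j)]
    (ι : ∀ j, Ej j →ₗ[ℝ] E) (hinj : ∀ j, Function.Injective (ι j))
    (hcont : ∀ j, Continuous (ι j))
    (step : ∀ j, Ej j →ₗ[ℝ] Ej (j + 1))
    (hstep : ∀ j x, ι (j + 1) (step j x) = ι j x)
    (hcompact : ∀ j, IsCompactOperator (⇑(step j)))
    (hunion : ∀ x : E, ∃ j, x ∈ LinearMap.range (ι j))
    (hfinal : ∀ (F : Type) [AddCommGroup F] [Module ℝ F] [TopologicalSpace F]
      [IsTopologicalAddGroup F] [ContinuousSMul ℝ F] [LocallyConvexSpace ℝ F]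
      (f : E →ₗ[ℝ] F), (∀ j, Continuous (f ∘ ι j)) → Continuous f)
    (K : Set E) (hK : IsCompact K) :
    ∃ j, K ⊆ Set.range (ι j) ∧ IsCompact ((ι j) ⁻¹' K) :=
  stmt6_general E Ej ι hinj hcont step hstep hcompact hunion hfinal K hK
end

section
/- Let E₁, E₂, F₁, F₂ be Banach spaces, θ₁ : E₁ → F₁ and θ₂ : E₂ → F₂ continuous linear maps, with θ₂ a compact operator. Let T₁ : G₁ → E₁ and T₂ : G₂ → E₂ be topological linear embeddings of locally convex spaces with closed image, and suppose κ : G₁ → G₂ is a linear map such that T₂ ∘ κ = h ∘ T₁ for a compact operator h : E₁ → E₂. Then κ is a compact operator. -/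
open Topology

theorem Topology.IsClosedEmbedding.isCompactOperator_comp_iff {M₁ M₂ M₃ : Type*} [Zero M₁]
    [TopologicalSpace M₁] [TopologicalSpace M₂] [TopologicalSpace M₃] {f : M₁ → M₂}
    {g : M₂ → M₃} (hg : IsClosedEmbedding g) :
    IsCompactOperator (g ∘ f) ↔ IsCompactOperator f := by
  constructor
  · rintro ⟨K, hK, hKf⟩
    exact ⟨g ⁻¹' K, hg.isCompact_preimage hK, hKf⟩
  · rintro ⟨K, hK, hKf⟩
    exact ⟨g '' K, hK.image hg.continuous,
      Filter.mem_of_superset hKf (Set.preimage_mono (Set.subset_preimage_image g K))⟩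

theorem stmt7_general (E₁ E₂ G₁ G₂ : Type*)
    [NormedAddCommGroup E₁] [NormedSpace ℝ E₁]
    [NormedAddCommGroup E₂] [NormedSpace ℝ E₂]
    [AddCommGroup G₁] [Module ℝ G₁] [TopologicalSpace G₁]
    [AddCommGroup G₂] [Module ℝ G₂] [TopologicalSpace G₂]
    (T₁ : G₁ →ₗ[ℝ] E₁) (T₂ : G₂ →ₗ[ℝ] E₂)
    (hT₁ind : Topology.IsInducing (⇑T₁))
    (hT₂ind : Topology.IsInducing (⇑T₂)) (hT₂inj : Function.Injective T₂)
    (hT₂cl : IsClosed (Set.range (⇑T₂)))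
    (κ : G₁ →ₗ[ℝ] G₂) (h : E₁ →L[ℝ] E₂) (hh : IsCompactOperator (⇑h))
    (hcomm : ∀ x, T₂ (κ x) = h (T₁ x)) :
    IsCompactOperator (⇑κ) := by
  have hT₂ : IsClosedEmbedding T₂ := ⟨⟨hT₂ind, hT₂inj⟩, hT₂cl⟩
  have hfactor : ⇑T₂ ∘ ⇑κ = ⇑h ∘ ⇑(⟨T₁, hT₁ind.continuous⟩ : G₁ →L[ℝ] E₁) := funext hcomm
  rw [← hT₂.isCompactOperator_comp_iff, hfactor]
  exact hh.comp_clm _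

/-- If `T₁, T₂` are closed topological linear embeddings into Banach spaces and
`κ` is a linear map satisfying `T₂ ∘ κ = h ∘ T₁` for a compact operator `h`, then
`κ` is a compact operator. -/
theorem stmt7 (E₁ E₂ F₁ F₂ G₁ G₂ : Type*)
    [NormedAddCommGroup E₁] [NormedSpace ℝ E₁] [CompleteSpace E₁]
    [NormedAddCommGroup E₂] [NormedSpace ℝ E₂] [CompleteSpace E₂]
    [NormedAddCommGroup F₁] [NormedSpace ℝ F₁] [CompleteSpace F₁]
    [NormedAddCommGroup F₂] [NormedSpace ℝ F₂] [CompleteSpace F₂]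
    [AddCommGroup G₁] [Module ℝ G₁] [TopologicalSpace G₁] [IsTopologicalAddGroup G₁]
    [ContinuousSMul ℝ G₁] [LocallyConvexSpace ℝ G₁]
    [AddCommGroup G₂] [Module ℝ G₂] [TopologicalSpace G₂] [IsTopologicalAddGroup G₂]
    [ContinuousSMul ℝ G₂] [LocallyConvexSpace ℝ G₂]
    (θ₁ : E₁ →L[ℝ] F₁) (θ₂ : E₂ →L[ℝ] F₂) (hθ₂ : IsCompactOperator (⇑θ₂))
    (T₁ : G₁ →ₗ[ℝ] E₁) (T₂ : G₂ →ₗ[ℝ] E₂)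
    (hT₁ind : Topology.IsInducing (⇑T₁)) (hT₁inj : Function.Injective T₁)
    (hT₁cl : IsClosed (Set.range (⇑T₁)))
    (hT₂ind : Topology.IsInducing (⇑T₂)) (hT₂inj : Function.Injective T₂)
    (hT₂cl : IsClosed (Set.range (⇑T₂)))
    (κ : G₁ →ₗ[ℝ] G₂) (h : E₁ →L[ℝ] E₂) (hh : IsCompactOperator (⇑h))
    (hcomm : ∀ x, T₂ (κ x) = h (T₁ x)) :
    IsCompactOperator (⇑κ) :=
  stmt7_general E₁ E₂ G₁ G₂ T₁ T₂ hT₁ind hT₂ind hT₂inj hT₂cl κ h hh hcomm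
end

section
/- Let F : ℝ^m → ℝ^m be a compactly supported smooth vector field, and let Fl_t denote its time-t flow. Let L ⊆ ℝ^m be a compact set and suppose for every y ∈ L there exists ε > 0 such that Fl_t(y) ∈ interior(L) for all t ∈ (0, ε). Then for every y ∈ L and every t > 0, Fl_t(y) ∈ interior(L). -/
/-- If `F` is a compactly supported smooth vector field on `ℝ^m` with flow `Fl`, `L` is
compact, and every point of `L` flows into the interior of `L` for small positive times,
then every point of `L` flows into the interior of `L` for all positive times. -/
theorem stmt10 (m : ℕ) (F : EuclideanSpace ℝ (Fin m) → EuclideanSpace ℝ (Fin m))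
    (hF : ContDiff ℝ (⊤ : ℕ∞) F) (hsupp : HasCompactSupport F)
    (Fl : ℝ → EuclideanSpace ℝ (Fin m) → EuclideanSpace ℝ (Fin m))
    (hFl0 : ∀ y, Fl 0 y = y)
    (hFladd : ∀ s t y, Fl (s + t) y = Fl s (Fl t y))
    (hFlode : ∀ t y, HasDerivAt (fun r => Fl r y) (F (Fl t y)) t)
    (L : Set (EuclideanSpace ℝ (Fin m))) (hL : IsCompact L)
    (hin : ∀ y ∈ L, ∃ ε > 0, ∀ t ∈ Set.Ioo (0 : ℝ) ε, Fl t y ∈ interior L) :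
    ∀ y ∈ L, ∀ t > 0, Fl t y ∈ interior L := by
  classical
  -- `F` is globally Lipschitz
  obtain ⟨K, hK⟩ : ∃ C, LipschitzWith C F :=
    hF.lipschitzWith_of_hasCompactSupport hsupp (by simp)
  -- continuity in time
  have hcontt : ∀ y, Continuous fun r => Fl r y := fun y =>
    continuous_iff_continuousAt.2 fun t => (hFlode t y).continuousAt
  -- derivative of backwards trajectories
  have hback : ∀ (x : EuclideanSpace ℝ (Fin m)) (s : ℝ),
      HasDerivAt (fun u => Fl (-u) x) ((-1 : ℝ) • F (Fl (-s) x)) s := by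
    intro x s
    exact (hFlode (-s) x).scomp s (hasDerivAt_neg s)
  -- continuity in space for nonpositive times, via Grönwall
  have hcontx : ∀ c : ℝ, c ≤ 0 → Continuous (Fl c) := by
    intro c hc
    have key : ∀ x z, dist (Fl c x) (Fl c z) ≤ Real.exp (K * (-c)) * dist x z := by
      intro x z
      have hv : ∀ t : ℝ, LipschitzWith K fun w => -F w := fun t => hK.neg
      have H := dist_le_of_trajectories_ODE (v := fun _ w => -F w) (K := K)
        (f := fun u => Fl (-u) x) (g := fun u => Fl (-u) z) (a := 0) (b := -c)
        (δ := dist x z) hv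
        (Continuous.continuousOn (by
          exact ((hcontt x).comp continuous_neg)))
        (fun t _ => by
          have := hback x t
          simpa using this.hasDerivWithinAt)
        (Continuous.continuousOn (by
          exact ((hcontt z).comp continuous_neg)))
        (fun t _ => by
          have := hback z t
          simpa using this.hasDerivWithinAt)
        (by simp [hFl0])
      have := H (-c) ⟨neg_nonneg.2 hc, le_rfl⟩
      simpa [mul_comm] using this
    refine LipschitzWith.continuous (K := (Real.exp (K * (-c))).toNNReal)
      (LipschitzWith.of_dist_le_mul fun x z => ?_)
    have := key x z
    rwa [Real.coe_toNNReal _ (Real.exp_nonneg _)]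
  -- forward invariance of `L`
  have hinv : ∀ y ∈ L, ∀ t : ℝ, 0 ≤ t → Fl t y ∈ L := by
    intro y hy t ht
    by_contra hmem
    set A : Set ℝ := {t : ℝ | 0 < t ∧ Fl t y ∉ L} with hA
    have htA : t ∈ A := by
      refine ⟨lt_of_le_of_ne ht ?_, hmem⟩
      rintro rfl
      exact hmem (by rwa [hFl0])
    have hAne : A.Nonempty := ⟨t, htA⟩
    have hAbdd : BddBelow A := ⟨0, fun a ha => ha.1.le⟩
    set τ := sInf A with hτ
    obtain ⟨ε₀, hε₀, hε₀in⟩ := hin y hy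
    have hlb : ∀ a ∈ A, ε₀ ≤ a := by
      intro a ha
      by_contra h
      push_neg at h
      exact ha.2 (interior_subset (hε₀in a ⟨ha.1, h⟩))
    have hτpos : 0 < τ := lt_of_lt_of_le hε₀ (le_csInf hAne hlb)
    have hbefore : ∀ s : ℝ, 0 ≤ s → s < τ → Fl s y ∈ L := by
      intro s hs0 hsτ
      rcases eq_or_lt_of_le hs0 with rfl | hs0
      · rwa [hFl0]
      · by_contra h
        exact absurd (csInf_le hAbdd (⟨hs0, h⟩ : s ∈ A)) (not_le.2 hsτ)
    have hτL : Fl τ y ∈ L := by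
      have htend : Filter.Tendsto (fun s => Fl s y) (nhdsWithin τ (Set.Iio τ))
          (nhds (Fl τ y)) :=
        ((hcontt y).continuousAt (x := τ)).continuousWithinAt
      refine hL.isClosed.mem_of_tendsto htend ?_
      filter_upwards [Ioo_mem_nhdsLT_of_mem (Set.mem_Ioc.2 ⟨hτpos, le_rfl⟩)] with s hs
      exact hbefore s hs.1.le hs.2
    obtain ⟨ε₁, hε₁, hε₁in⟩ := hin _ hτL
    have hlb2 : ∀ a ∈ A, τ + ε₁ ≤ a := by
      intro a ha
      by_contra h
      push_neg at h
      have haτ : τ ≤ a := csInf_le hAbdd ha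
      rcases eq_or_lt_of_le haτ with rfl | haτ
      · exact ha.2 hτL
      · have : Fl a y = Fl (a - τ) (Fl τ y) := by
          rw [← hFladd]; ring_nf
        exact ha.2 (this ▸ interior_subset
          (hε₁in (a - τ) ⟨sub_pos.2 haτ, by linarith⟩))
    have : τ + ε₁ ≤ τ := le_csInf hAne hlb2
    linarith
  -- final argument
  intro y hy t ht
  obtain ⟨ε, hε, hεin⟩ := hin y hy
  set s := min (t / 2) (ε / 2) with hs
  have hs0 : 0 < s := lt_min (by linarith) (by linarith)
  have hsε : s < ε := lt_of_le_of_lt (min_le_right _ _) (by linarith)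
  have hst : s < t := lt_of_le_of_lt (min_le_left _ _) (by linarith)
  have hz : Fl s y ∈ interior L := hεin s ⟨hs0, hsε⟩
  set r := t - s with hr
  have hr0 : 0 ≤ r := by simp [hr]; linarith
  set U : Set (EuclideanSpace ℝ (Fin m)) := Fl (-r) ⁻¹' interior L with hU
  have hUopen : IsOpen U := isOpen_interior.preimage (hcontx (-r) (by linarith))
  have hcancel : ∀ x, Fl r (Fl (-r) x) = x := by
    intro x
    rw [← hFladd]
    simp [hFl0]
  have hUL : U ⊆ L := by
    intro x hx
    have := hinv _ (interior_subset hx) r hr0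
    rwa [hcancel] at this
  have hUint : U ⊆ interior L := interior_maximal hUL hUopen
  apply hUint
  show Fl (-r) (Fl t y) ∈ interior L
  rw [← hFladd]
  have : -r + t = s := by rw [hr]; ring
  rw [this]
  exact hz
end

section
/- Let O ⊆ ℝ^m be open and U a nonempty open set with compact closure contained in O. Let F : ℝ^m → ℝ^m be a compactly supported smooth vector field with flow Fl. Then there exists t₀ < 0 such that W := Fl_{t₀}(U) satisfies: closure(U) ⊆ W, W is open, and closure(W) ⊆ O. -/
open Set Metric Real

/-- If `U` is a nonempty open set with compact closure contained in the open set `O`,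
and `F` is a compactly supported smooth vector field with flow `Fl` such that every
point of `closure U` flows into `U` for all positive times, then there is `t₀ < 0` such
that `W := Fl_{t₀}(U)` is open with `closure U ⊆ W` and `closure W ⊆ O`. -/
theorem stmt11 (m : ℕ) (O U : Set (EuclideanSpace ℝ (Fin m)))
    (hO : IsOpen O) (hUo : IsOpen U) (hUne : U.Nonempty)
    (hUc : IsCompact (closure U)) (hUO : closure U ⊆ O)
    (F : EuclideanSpace ℝ (Fin m) → EuclideanSpace ℝ (Fin m))
    (hF : ContDiff ℝ (⊤ : ℕ∞) F) (hsupp : HasCompactSupport F)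
    (Fl : ℝ → EuclideanSpace ℝ (Fin m) → EuclideanSpace ℝ (Fin m))
    (hFl0 : ∀ y, Fl 0 y = y)
    (hFladd : ∀ s t y, Fl (s + t) y = Fl s (Fl t y))
    (hFlode : ∀ t y, HasDerivAt (fun r => Fl r y) (F (Fl t y)) t)
    (hinward : ∀ y ∈ closure U, ∀ t > (0 : ℝ), Fl t y ∈ U) :
    ∃ t₀ < (0 : ℝ), closure U ⊆ Fl t₀ '' U ∧ IsOpen (Fl t₀ '' U) ∧
      closure (Fl t₀ '' U) ⊆ O := by
  -- a Lipschitz constant for `F`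
  obtain ⟨Kc, hKc⟩ := ContDiff.lipschitzWith_of_hasCompactSupport hsupp hF (by simp)
  -- a bound for `‖F‖`
  obtain ⟨C₀, hC₀⟩ := hsupp.exists_bound_of_continuous hF.continuous
  set C : ℝ := max C₀ 0 with hCdef
  have hCnn : 0 ≤ C := le_max_right _ _
  have hC : ∀ x, ‖F x‖ ≤ C := fun x => le_trans (hC₀ x) (le_max_left _ _)
  -- flows are continuous in the starting point
  have hcont : ∀ t : ℝ, Continuous (Fl t) := by
    intro t
    have key : ∀ x y : EuclideanSpace ℝ (Fin m),
        dist (Fl t x) (Fl t y) ≤ dist x y * Real.exp (Kc * |t|) := by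
      intro x y
      rcases le_or_gt 0 t with ht | ht
      · have := dist_le_of_trajectories_ODE (v := fun _ z => F z) (K := Kc)
          (f := fun s => Fl s x) (g := fun s => Fl s y) (a := 0) (b := t)
          (δ := dist x y) (fun _ => hKc)
          (Continuous.continuousOn (continuous_iff_continuousAt.2
            fun s => (hFlode s x).continuousAt))
          (fun s _ => (hFlode s x).hasDerivWithinAt)
          (Continuous.continuousOn (continuous_iff_continuousAt.2
            fun s => (hFlode s y).continuousAt))
          (fun s _ => (hFlode s y).hasDerivWithinAt)
          (by simp [hFl0]) t (right_mem_Icc.2 ht)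
        simpa [abs_of_nonneg ht] using this
      · have hd : ∀ z : EuclideanSpace ℝ (Fin m), ∀ s : ℝ,
            HasDerivAt (fun r => Fl (-r) z) (-F (Fl (-s) z)) s := by
          intro z s
          have h1 := (hFlode (-s) z).scomp s ((hasDerivAt_id s).neg)
          simpa [Function.comp_def] using h1
        have hKneg : LipschitzWith Kc (fun z : EuclideanSpace ℝ (Fin m) => -F z) := by
          intro a b
          simpa [edist_neg_neg] using hKc a b
        have := dist_le_of_trajectories_ODE (v := fun _ z => -F z) (K := Kc)
          (f := fun s => Fl (-s) x) (g := fun s => Fl (-s) y) (a := 0) (b := -t)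
          (δ := dist x y) (fun _ => hKneg)
          (Continuous.continuousOn (continuous_iff_continuousAt.2
            fun s => ((hd x s).continuousAt)))
          (fun s _ => (hd x s).hasDerivWithinAt)
          (Continuous.continuousOn (continuous_iff_continuousAt.2
            fun s => ((hd y s).continuousAt)))
          (fun s _ => (hd y s).hasDerivWithinAt)
          (by simp [hFl0]) (-t) (right_mem_Icc.2 (by linarith))
        simpa [abs_of_neg ht] using this
    have : LipschitzWith (Real.toNNReal (Real.exp (Kc * |t|))) (Fl t) := by
      apply LipschitzWith.of_dist_le_mul
      intro x y
      rw [Real.coe_toNNReal _ (Real.exp_nonneg _)]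
      simpa [mul_comm] using key x y
    exact this.continuous
  -- `Fl t` displaces points by at most `C * |t|`
  have hdisp : ∀ (t : ℝ) (y : EuclideanSpace ℝ (Fin m)), dist (Fl t y) y ≤ C * |t| := by
    intro t y
    have := Convex.norm_image_sub_le_of_norm_hasDerivWithin_le
      (f := fun r => Fl r y) (f' := fun r => F (Fl r y)) (s := (univ : Set ℝ))
      (fun s _ => (hFlode s y).hasDerivWithinAt)
      (fun s _ => hC _) convex_univ (mem_univ (0 : ℝ)) (mem_univ t)
    simp only [hFl0] at this
    simpa [dist_eq_norm, Real.norm_eq_abs] using this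
  -- thickening of `closure U` inside `O`
  obtain ⟨δ, hδpos, hδ⟩ := hUc.exists_thickening_subset_open hO hUO
  set t₀ : ℝ := -(δ / (C + 1)) with ht₀def
  have hCpos : (0 : ℝ) < C + 1 := by linarith
  have ht₀neg : t₀ < 0 := by
    rw [ht₀def, neg_lt, neg_zero]
    exact div_pos hδpos hCpos
  refine ⟨t₀, ht₀neg, ?_, ?_, ?_⟩
  · -- closure U ⊆ Fl t₀ '' U
    intro y hy
    refine ⟨Fl (-t₀) y, hinward y hy (-t₀) (by linarith), ?_⟩
    rw [← hFladd, add_neg_cancel, hFl0]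
  · -- openness
    have : Fl t₀ '' U = Fl (-t₀) ⁻¹' U := by
      ext z
      constructor
      · rintro ⟨x, hx, rfl⟩
        simpa [mem_preimage, ← hFladd, hFl0] using hx
      · intro hz
        exact ⟨Fl (-t₀) z, hz, by rw [← hFladd, add_neg_cancel, hFl0]⟩
    rw [this]
    exact hUo.preimage (hcont (-t₀))
  · -- closure of image inside O
    have hcomp : IsCompact (Fl t₀ '' closure U) := hUc.image (hcont t₀)
    have hsub : closure (Fl t₀ '' U) ⊆ Fl t₀ '' closure U :=
      closure_minimal (image_mono subset_closure) hcomp.isClosed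
    refine hsub.trans ?_
    rintro _ ⟨y, hy, rfl⟩
    apply hδ
    rw [mem_thickening_iff]
    refine ⟨y, hy, lt_of_le_of_lt (hdisp t₀ y) ?_⟩
    have habs : |t₀| = δ / (C + 1) := by
      rw [ht₀def, abs_neg, abs_of_pos (div_pos hδpos hCpos)]
    rw [habs]
    calc C * (δ / (C + 1)) = δ * (C / (C + 1)) := by ring
      _ < δ * 1 := by
          apply mul_lt_mul_of_pos_left _ hδpos
          rw [div_lt_one hCpos]; linarith
      _ = δ := mul_one δ
end
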